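/- Let E₁₂, E₂₃, E₃₁ be a compatible triplet of essential matrices, i.e. Eᵢⱼ = Rᵢ [bᵢ − bⱼ]× Rⱼᵀ for some R₁, R₂, R₃ ∈ SO(3) and b₁, b₂, b₃ ∈ ℝ³. Then tr(E₁₂E₂₃E₃₁) = 0. -/

import Mathlib

/-! The inner rotations cancel in pairs (`Rⱼᵀ Rⱼ = 1`), so the product is conjugate by `R₁` to
`[b₁ − b₂]× [b₂ − b₃]× [b₃ − b₁]×`. The trace of a product of three cross-product matrices is a
triple product, which vanishes here because the three vectors sum to zero. -/

open Matrix

/-- The cross-product matrix of a vector `a ∈ ℝ³`. -/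
def skew (a : Fin 3 → ℝ) : Matrix (Fin 3) (Fin 3) ℝ :=
  !![0, -a 2, a 1; a 2, 0, -a 0; -a 1, a 0, 0]

theorem trace_skew_mul_skew_mul_skew (a b c : Fin 3 → ℝ) :
    trace (skew a * skew b * skew c) = a ⬝ᵥ (c ⨯₃ b) := by
  simp [skew, trace_fin_three, Fin.sum_univ_three, cross_apply, dotProduct]
  ring

theorem trace_skew_mul_skew_mul_skew_of_add_add_eq_zero {a b c : Fin 3 → ℝ}
    (h : a + b + c = 0) : trace (skew a * skew b * skew c) = 0 := by
  rw [trace_skew_mul_skew_mul_skew, eq_neg_of_add_eq_zero_right h]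
  simp [cross_self]

section

variable {n α : Type*} [Fintype n] [DecidableEq n] [CommRing α]

theorem mul_mul_transpose_mul_mul_mul {Q : Matrix n n α} (hQ : Q * Qᵀ = 1)
    (P A B S : Matrix n n α) : P * A * Qᵀ * (Q * B * S) = P * (A * B) * S := by
  have hQ' : Qᵀ * Q = 1 := mul_eq_one_comm.mp hQ
  calc P * A * Qᵀ * (Q * B * S) = P * A * (Qᵀ * Q) * B * S := by noncomm_ring
    _ = P * (A * B) * S := by rw [hQ', mul_one, ← Matrix.mul_assoc]

theorem trace_mul_mul_transpose {R : Matrix n n α} (hR : R * Rᵀ = 1) (M : Matrix n n α) :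
    trace (R * M * Rᵀ) = trace M := by
  rw [trace_mul_cycle, mul_eq_one_comm.mp hR, Matrix.one_mul]

end

theorem trace_compatible_triplet_general
    (R₁ R₂ R₃ : Matrix (Fin 3) (Fin 3) ℝ) (b₁ b₂ b₃ : Fin 3 → ℝ)
    (hR₁ : R₁ * R₁ᵀ = 1)
    (hR₂ : R₂ * R₂ᵀ = 1)
    (hR₃ : R₃ * R₃ᵀ = 1)
    (E₁₂ E₂₃ E₃₁ : Matrix (Fin 3) (Fin 3) ℝ)
    (hE₁₂ : E₁₂ = R₁ * skew (b₁ - b₂) * R₂ᵀ)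
    (hE₂₃ : E₂₃ = R₂ * skew (b₂ - b₃) * R₃ᵀ)
    (hE₃₁ : E₃₁ = R₃ * skew (b₃ - b₁) * R₁ᵀ) :
    Matrix.trace (E₁₂ * E₂₃ * E₃₁) = 0 := by
  subst hE₁₂ hE₂₃ hE₃₁
  rw [mul_mul_transpose_mul_mul_mul hR₂, mul_mul_transpose_mul_mul_mul hR₃,
    trace_mul_mul_transpose hR₁]
  exact trace_skew_mul_skew_mul_skew_of_add_add_eq_zero (by abel)

/-- For a compatible triplet of essential matrices, `tr(E₁₂E₂₃E₃₁) = 0`. -/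
theorem trace_compatible_triplet
    (R₁ R₂ R₃ : Matrix (Fin 3) (Fin 3) ℝ) (b₁ b₂ b₃ : Fin 3 → ℝ)
    (hR₁ : R₁ * R₁ᵀ = 1) (hR₁det : R₁.det = 1)
    (hR₂ : R₂ * R₂ᵀ = 1) (hR₂det : R₂.det = 1)
    (hR₃ : R₃ * R₃ᵀ = 1) (hR₃det : R₃.det = 1)
    (E₁₂ E₂₃ E₃₁ : Matrix (Fin 3) (Fin 3) ℝ)
    (hE₁₂ : E₁₂ = R₁ * skew (b₁ - b₂) * R₂ᵀ)
    (hE₂₃ : E₂₃ = R₂ * skew (b₂ - b₃) * R₃ᵀ)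
    (hE₃₁ : E₃₁ = R₃ * skew (b₃ - b₁) * R₁ᵀ) :
    Matrix.trace (E₁₂ * E₂₃ * E₃₁) = 0 :=
  trace_compatible_triplet_general R₁ R₂ R₃ b₁ b₂ b₃ hR₁ hR₂ hR₃ E₁₂ E₂₃ E₃₁ hE₁₂ hE₂₃ hE₃₁
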